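/- arXiv:1806.06141 — 2 statements merged into one kernel-verified Lean document; each statement's English description precedes it below -/
import Mathlib

section
/- Let A and B be positive bounded operators on a complex Hilbert space H with AB = BA. Then AB = P_{cl R(A)} P_{cl R(B)} |AB| is the polar decomposition of AB; that is, P_{cl R(A)} P_{cl R(B)} is a partial isometry and (P_{cl R(A)} P_{cl R(B)})^*(P_{cl R(A)} P_{cl R(B)}) equals the orthogonal projection onto the closure of the range of (AB)^*. -/
open ContinuousLinearMap

variable {H : Type*} [NormedAddCommGroup H] [InnerProductSpace ℂ H] [CompleteSpace H]

/-- The absolute value `|T| = (T^*T)^(1/2)` of a bounded operator on a complex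
Hilbert space, defined via the continuous functional calculus. -/
noncomputable def absOp (T : H →L[ℂ] H) : H →L[ℂ] H :=
  cfc Real.sqrt (adjoint T * T)

/-- The orthogonal projection of `H` onto the closure of the range of `T`,
regarded as an operator on `H`. -/
noncomputable def rangeProjOp (T : H →L[ℂ] H) : H →L[ℂ] H :=
  (LinearMap.range (T : H →ₗ[ℂ] H)).topologicalClosure.subtypeL ∘L
    Submodule.orthogonalProjectionOnto (LinearMap.range (T : H →ₗ[ℂ] H)).topologicalClosure

/-- `U` is a partial isometry: `U^*U` is an orthogonal projection
(a self-adjoint idempotent). -/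
def IsPartialIsometryOp (U : H →L[ℂ] H) : Prop :=
  IsSelfAdjoint (adjoint U * U) ∧ (adjoint U * U) * (adjoint U * U) = adjoint U * U

/-- `T = U|T|` is the polar decomposition of `T`: `U` is a partial isometry and
`U^*U` is the orthogonal projection onto the closure of the range of `T^*`. -/
def IsPolarDecompositionOp (T U : H →L[ℂ] H) : Prop :=
  T = U * absOp T ∧ IsPartialIsometryOp U ∧ adjoint U * U = rangeProjOp (adjoint T)

/-! Since `A` and `B` commute, `AB` is positive, so `|AB| = AB = (AB)^*`. A range projection
`P_{cl R(S)}` of a self-adjoint `S` commutes with every operator commuting with `S`, because both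
`cl R(S)` and `ker S = cl R(S)ᗮ` are invariant under it. Hence `P_A P_B` fixes
`cl R(AB) ⊆ cl R(A) ∩ cl R(B)` and kills `ker (AB)`: from `ABx = 0` we get `P_A Bx = 0`, so
`B P_A x = 0` and `P_B P_A x = 0`. Thus `P_A P_B = P_{cl R(AB)}`, a star projection, and all three
claims follow. -/

lemma absOp_eq_abs (T : H →L[ℂ] H) : absOp T = CFC.abs T := by
  rw [absOp, CFC.abs, CFC.sqrt_eq_real_sqrt _ (star_mul_self_nonneg T), cfcₙ_eq_cfc,
    star_eq_adjoint]

lemma absOp_of_nonneg {T : H →L[ℂ] H} (hT : 0 ≤ T) : absOp T = T := by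
  rw [absOp_eq_abs, CFC.abs_of_nonneg T hT]

lemma rangeProjOp_eq_starProjection (T : H →L[ℂ] H) :
    rangeProjOp T = T.range.topologicalClosure.starProjection := rfl

lemma isStarProjection_rangeProjOp (T : H →L[ℂ] H) : IsStarProjection (rangeProjOp T) :=
  isStarProjection_starProjection

lemma range_rangeProjOp (T : H →L[ℂ] H) :
    (rangeProjOp T).range = T.range.topologicalClosure :=
  Submodule.range_starProjection _

lemma IsSelfAdjoint.ker_rangeProjOp {S : H →L[ℂ] H} (hS : IsSelfAdjoint S) :
    (rangeProjOp S).ker = S.ker := by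
  rw [rangeProjOp_eq_starProjection, Submodule.ker_starProjection, Submodule.orthogonal_closure,
    orthogonal_range, hS.adjoint_eq]

lemma IsSelfAdjoint.rangeProjOp_apply_eq_zero_iff {S : H →L[ℂ] H} (hS : IsSelfAdjoint S)
    {x : H} : rangeProjOp S x = 0 ↔ S x = 0 :=
  SetLike.ext_iff.mp hS.ker_rangeProjOp x

lemma rangeProjOp_mul_of_range_le {S T : H →L[ℂ] H}
    (h : T.range ≤ S.range.topologicalClosure) :
    rangeProjOp S * T = T := by
  ext x
  exact Submodule.starProjection_eq_self_iff.mpr (h ⟨x, rfl⟩)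

lemma rangeProjOp_mul_self (T : H →L[ℂ] H) : rangeProjOp T * T = T :=
  rangeProjOp_mul_of_range_le (Submodule.le_topologicalClosure _)

lemma commute_rangeProjOp {S C : H →L[ℂ] H} (hS : IsSelfAdjoint S) (h : Commute S C) :
    Commute (rangeProjOp S) C := by
  have hSC : ∀ x, S (C x) = C (S x) := fun x => congr($(h.eq) x)
  rw [(isStarProjection_rangeProjOp S).isIdempotentElem.commute_iff, range_rangeProjOp,
    hS.ker_rangeProjOp]
  constructor
  · refine Submodule.topologicalClosure_mem_invtSubmodule ?_
    rintro _ ⟨x, rfl⟩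
    exact ⟨C x, hSC x⟩
  · intro x (hx : S x = 0)
    show S (C x) = 0
    rw [hSC, hx, map_zero]

lemma rangeProjOp_mul_rangeProjOp_of_commute {S T : H →L[ℂ] H} (hS : IsSelfAdjoint S)
    (hT : IsSelfAdjoint T) (h : Commute S T) :
    rangeProjOp S * rangeProjOp T = rangeProjOp (S * T) := by
  set Q := rangeProjOp (S * T)
  set P := rangeProjOp S * rangeProjOp T with hP
  have hST : IsSelfAdjoint (S * T) := (IsSelfAdjoint.commute_iff hS hT).mp h
  have hker : ∀ x, (S * T) x = 0 → P x = 0 := by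
    intro x (hx : S (T x) = 0)
    have hSx : rangeProjOp S (T x) = 0 := hS.rangeProjOp_apply_eq_zero_iff.mpr hx
    have hTSx : rangeProjOp T (rangeProjOp S x) = 0 := by
      rw [hT.rangeProjOp_apply_eq_zero_iff, ← mul_apply_eq_comp,
        ← (commute_rangeProjOp hS h).eq, mul_apply_eq_comp, hSx]
    have hPST : Commute (rangeProjOp S) (rangeProjOp T) :=
      (commute_rangeProjOp hT (commute_rangeProjOp hS h).symm).symm
    rw [hP, hPST.eq, mul_apply_eq_comp, hTSx]
  have hrange : P * Q = Q := by
    have hQS : Q.range ≤ S.range.topologicalClosure := by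
      rw [range_rangeProjOp]
      exact Submodule.topologicalClosure_mono (LinearMap.range_comp_le_range _ _)
    have hQT : Q.range ≤ T.range.topologicalClosure := by
      rw [range_rangeProjOp, h.eq]
      exact Submodule.topologicalClosure_mono (LinearMap.range_comp_le_range _ _)
    rw [mul_assoc, rangeProjOp_mul_of_range_le hQT, rangeProjOp_mul_of_range_le hQS]
  ext x
  have hx : (S * T) (x - Q x) = 0 := by
    rw [← hST.rangeProjOp_apply_eq_zero_iff, map_sub, ← mul_apply_eq_comp,
      (isStarProjection_rangeProjOp _).isIdempotentElem.eq, sub_self]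
  calc P x = P (Q x) + P (x - Q x) := by rw [← map_add, add_sub_cancel]
    _ = Q x := by rw [← mul_apply_eq_comp, hrange, hker _ hx, add_zero]

lemma IsStarProjection.adjoint_mul_self {P : H →L[ℂ] H} (hP : IsStarProjection P) :
    adjoint P * P = P := by
  rw [← star_eq_adjoint, hP.isSelfAdjoint.star_eq, hP.isIdempotentElem.eq]

lemma IsStarProjection.isPartialIsometryOp {P : H →L[ℂ] H} (hP : IsStarProjection P) :
    IsPartialIsometryOp P := by
  rw [IsPartialIsometryOp, hP.adjoint_mul_self]
  exact ⟨hP.isSelfAdjoint, hP.isIdempotentElem.eq⟩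

/-- If `A, B` are commuting positive operators, then
`AB = P_{cl R(A)} P_{cl R(B)} |AB|` is the polar decomposition of `AB`. -/
theorem polarDecomposition_of_pos_commute (A B : H →L[ℂ] H)
    (hA : A.IsPositive) (hB : B.IsPositive) (hAB : A * B = B * A) :
    A * B = (rangeProjOp A * rangeProjOp B) * absOp (A * B) ∧
    IsPartialIsometryOp (rangeProjOp A * rangeProjOp B) ∧
    adjoint (rangeProjOp A * rangeProjOp B) * (rangeProjOp A * rangeProjOp B) =
        rangeProjOp (adjoint (A * B)) := by
  have hAB_nonneg : 0 ≤ A * B :=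
    Commute.mul_nonneg ((nonneg_iff_isPositive A).mpr hA) ((nonneg_iff_isPositive B).mpr hB) hAB
  have hP := isStarProjection_rangeProjOp (A * B)
  rw [rangeProjOp_mul_rangeProjOp_of_commute hA.isSelfAdjoint hB.isSelfAdjoint hAB,
    absOp_of_nonneg hAB_nonneg, hAB_nonneg.isSelfAdjoint.adjoint_eq, hP.adjoint_mul_self]
  exact ⟨(rangeProjOp_mul_self _).symm, hP.isPartialIsometryOp, rfl⟩
end

section
/- Let T = U|T| and S = V|S| be the polar decompositions of bounded operators T, S on a complex Hilbert space H. Then the following are equivalent: (i) |T|·|S^*| = |S^*|·|T|; (ii) TS = UV|TS| is the polar decomposition of TS (i.e. UV is a partial isometry and (UV)^*(UV) equals the orthogonal projection onto the closure of the range of (TS)^*); (iii) TS = UV|TS|. -/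
open ContinuousLinearMap

variable {H : Type*} [NormedAddCommGroup H] [InnerProductSpace ℂ H] [CompleteSpace H]

/-! With `A = |T|` and `B = |S^*|` one has `T = UA` and `S = BV`, so `TS = U(AB)V`.

If `A` and `B` commute, then `AB ≥ 0` and `|TS| = V^*(AB)V`, which gives `TS = UV|TS|`.
Moreover `A` then commutes with the range projection of `B`, and this controls the kernel
of `TS` well enough to identify `(UV)^*(UV) = V^*U^*UV` with the range projection of `(TS)^*`.

Conversely, `TS = UV|TS|` gives `AB = PY` with `P = U^*U` and `Y = V|TS|V^*` self-adjoint,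
and `Y^2 = (AB)^*(AB)`. So `‖PYx‖ = ‖Yx‖` for every `x`; an orthogonal projection preserves
the norm only of vectors in its range, hence `AB = Y` is self-adjoint, i.e. `AB = BA`. -/

section Operators

variable {X Y A R C : H →L[ℂ] H}

lemma adjoint_mul (X Y : H →L[ℂ] H) : adjoint (X * Y) = adjoint Y * adjoint X := by
  simp only [← star_eq_adjoint, star_mul]

lemma norm_apply_eq_of_adjoint_mul_self_eq (h : adjoint X * X = adjoint Y * Y) (v : H) :
    ‖X v‖ = ‖Y v‖ := by
  have hsq : ‖X v‖ ^ 2 = ‖Y v‖ ^ 2 := by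
    rw [apply_norm_sq_eq_inner_adjoint_left, apply_norm_sq_eq_inner_adjoint_left]
    exact congrArg (fun Z : H →L[ℂ] H => RCLike.re (inner ℂ (Z v) v)) h
  exact (sq_eq_sq₀ (norm_nonneg _) (norm_nonneg _)).mp hsq

lemma apply_eq_zero_iff_of_adjoint_mul_self_eq (h : adjoint X * X = adjoint Y * Y) (v : H) :
    X v = 0 ↔ Y v = 0 := by
  rw [← norm_eq_zero, norm_apply_eq_of_adjoint_mul_self_eq h, norm_eq_zero]

lemma absOp_nonneg (X : H →L[ℂ] H) : 0 ≤ absOp X :=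
  cfc_nonneg fun x _ => Real.sqrt_nonneg x

lemma adjoint_absOp (X : H →L[ℂ] H) : adjoint (absOp X) = absOp X := by
  rw [← star_eq_adjoint]
  exact (absOp_nonneg X).isSelfAdjoint

lemma absOp_mul_absOp (X : H →L[ℂ] H) : absOp X * absOp X = adjoint X * X := by
  have hX : 0 ≤ adjoint X * X := by rw [← star_eq_adjoint]; exact star_mul_self_nonneg X
  rw [absOp, ← cfc_mul ..]
  conv_rhs => rw [← cfc_id (R := ℝ) (adjoint X * X)]
  exact cfc_congr fun x hx => Real.mul_self_sqrt (spectrum_nonneg_of_nonneg hX hx)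

lemma absOp_eq_of_mul_self (hC : 0 ≤ C) (h : C * C = adjoint X * X) : absOp X = C := by
  have hCC : C * C = cfc (fun x : ℝ => x * x) C := by rw [cfc_mul .., cfc_id' ℝ C]
  rw [absOp, ← h, hCC, ← cfc_comp' Real.sqrt (fun x : ℝ => x * x) C]
  conv_rhs => rw [← cfc_id (R := ℝ) C]
  exact cfc_congr fun x hx => Real.sqrt_mul_self (spectrum_nonneg_of_nonneg hC hx)

lemma absOp_apply_eq_zero_iff (X : H →L[ℂ] H) (v : H) : absOp X v = 0 ↔ X v = 0 :=
  apply_eq_zero_iff_of_adjoint_mul_self_eq (by rw [adjoint_absOp, absOp_mul_absOp]) v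

lemma rangeProjOp_eq_starProjection_s7 (X : H →L[ℂ] H) :
    rangeProjOp X = (LinearMap.range (X : H →ₗ[ℂ] H)).topologicalClosure.starProjection :=
  rfl

lemma adjoint_rangeProjOp (X : H →L[ℂ] H) : adjoint (rangeProjOp X) = rangeProjOp X :=
  (isSelfAdjoint_starProjection _).adjoint_eq

lemma rangeProjOp_apply_eq_zero_iff {v : H} : rangeProjOp X v = 0 ↔ adjoint X v = 0 := by
  rw [rangeProjOp_eq_starProjection_s7, Submodule.starProjection_apply_eq_zero_iff,
    Submodule.orthogonal_closure, orthogonal_range]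
  rfl

lemma adjoint_apply_sub_rangeProjOp (X : H →L[ℂ] H) (v : H) :
    adjoint X (v - rangeProjOp X v) = 0 := by
  have h := Submodule.sub_starProjection_mem_orthogonal
    (K := (LinearMap.range (X : H →ₗ[ℂ] H)).topologicalClosure) v
  rwa [Submodule.orthogonal_closure, orthogonal_range] at h

lemma mul_rangeProjOp_eq_self (h : ∀ y, adjoint X y = 0 → A y = 0) : A * rangeProjOp X = A := by
  ext v
  have hv := h _ (adjoint_apply_sub_rangeProjOp X v)
  rw [map_sub, sub_eq_zero] at hv
  exact hv.symm

lemma rangeProjOp_mul_eq_self (h : ∀ y, adjoint X y = 0 → adjoint A y = 0) :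
    rangeProjOp X * A = A := by
  simpa only [adjoint_mul, adjoint_adjoint, adjoint_rangeProjOp] using
    congrArg adjoint (mul_rangeProjOp_eq_self h)

lemma eq_rangeProjOp_of (h₁ : R * X = X) (h₂ : ∀ y, adjoint X y = 0 → R y = 0) :
    R = rangeProjOp X := by
  have hR : rangeProjOp X * adjoint R = rangeProjOp X := by
    ext y
    have hX : adjoint X (adjoint R y - y) = 0 := by
      rw [map_sub, ← mul_apply_eq_comp, ← adjoint_mul, h₁, sub_self]
    have := rangeProjOp_apply_eq_zero_iff.mpr hX
    rwa [map_sub, sub_eq_zero] at this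
  calc R = R * rangeProjOp X := (mul_rangeProjOp_eq_self h₂).symm
    _ = rangeProjOp X := by
      simpa only [adjoint_mul, adjoint_adjoint, adjoint_rangeProjOp] using congrArg adjoint hR

lemma commute_rangeProjOp_of_commute (hC : IsSelfAdjoint C) (h : Commute A C) :
    Commute A (rangeProjOp C) := by
  have hC' : adjoint C = C := hC.adjoint_eq
  have compress : ∀ B : H →L[ℂ] H, Commute B C →
      rangeProjOp C * B * rangeProjOp C = rangeProjOp C * B := fun B hB =>
    mul_rangeProjOp_eq_self fun y hy => by
      rw [hC'] at hy
      rw [mul_apply_eq_comp, rangeProjOp_apply_eq_zero_iff, hC', ← mul_apply_eq_comp, ← hB.eq,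
        mul_apply_eq_comp, hy, map_zero]
  have hA' : Commute (adjoint A) C := by
    simpa only [Commute, SemiconjBy, adjoint_mul, hC'] using (congrArg adjoint h.eq).symm
  have := congrArg adjoint (compress _ hA')
  simp only [adjoint_mul, adjoint_adjoint, adjoint_rangeProjOp, ← mul_assoc] at this
  exact this.symm.trans (compress A h)

lemma rangeProjOp_adjoint_mul_absOp (X : H →L[ℂ] H) :
    rangeProjOp (adjoint X) * absOp X = absOp X :=
  rangeProjOp_mul_eq_self fun y hy => by
    rwa [adjoint_absOp, absOp_apply_eq_zero_iff, ← adjoint_adjoint X]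

lemma absOp_mul_rangeProjOp_adjoint (X : H →L[ℂ] H) :
    absOp X * rangeProjOp (adjoint X) = absOp X := by
  simpa only [adjoint_mul, adjoint_absOp, adjoint_rangeProjOp] using
    congrArg adjoint (rangeProjOp_adjoint_mul_absOp X)

lemma eq_of_rangeProjOp_mul_eq {Z X Y : H →L[ℂ] H} (h₁ : X = rangeProjOp Z * Y)
    (h₂ : adjoint X * X = adjoint Y * Y) : X = Y := by
  ext v
  have hn := norm_apply_eq_of_adjoint_mul_self_eq h₂ v
  rw [h₁, mul_apply_eq_comp] at hn ⊢
  exact Submodule.starProjection_eq_self_iff.mpr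
    ((Submodule.mem_iff_norm_starProjection _ _).mpr hn)

lemma isPartialIsometryOp_of_adjoint_mul_self_eq {W : H →L[ℂ] H}
    (h : adjoint W * W = rangeProjOp X) : IsPartialIsometryOp W := by
  rw [IsPartialIsometryOp, h]
  exact ⟨isSelfAdjoint_starProjection _, Submodule.isIdempotentElem_starProjection _⟩

end Operators

namespace IsPolarDecompositionOp

section

variable {S V : H →L[ℂ] H} (hS : IsPolarDecompositionOp S V)
include hS

lemma mul_rangeProjOp : V * rangeProjOp (adjoint S) = V :=
  mul_rangeProjOp_eq_self fun y hy => by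
    have hP : (adjoint V * V) y = 0 := by
      rw [hS.2.2, rangeProjOp_apply_eq_zero_iff, adjoint_adjoint]
      rwa [adjoint_adjoint] at hy
    rw [← inner_self_eq_zero (𝕜 := ℂ), ← adjoint_inner_left, ← mul_apply_eq_comp, hP,
      inner_zero_left]

lemma rangeProjOp_mul_adjoint : rangeProjOp (adjoint S) * adjoint V = adjoint V := by
  simpa only [adjoint_mul, adjoint_rangeProjOp] using congrArg adjoint hS.mul_rangeProjOp

lemma absOp_adjoint : absOp (adjoint S) = V * absOp S * adjoint V := by
  refine absOp_eq_of_mul_self ?_ ?_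
  · simpa only [star_eq_adjoint] using star_right_conjugate_nonneg (absOp_nonneg S) V
  · calc V * absOp S * adjoint V * (V * absOp S * adjoint V)
        = V * (absOp S * rangeProjOp (adjoint S)) * absOp S * adjoint V := by
          rw [← hS.2.2]; simp only [mul_assoc]
      _ = V * absOp S * adjoint (V * absOp S) := by
          rw [absOp_mul_rangeProjOp_adjoint, adjoint_mul, adjoint_absOp]; simp only [mul_assoc]
      _ = adjoint (adjoint S) * adjoint S := by rw [adjoint_adjoint, ← hS.1]

lemma absOp_adjoint_mul : absOp (adjoint S) * V = S := by
  rw [hS.absOp_adjoint, mul_assoc, hS.2.2, mul_assoc, absOp_mul_rangeProjOp_adjoint, ← hS.1]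

lemma mul_adjoint : S * adjoint V = absOp (adjoint S) := by
  rw [hS.absOp_adjoint, ← hS.1]

lemma absOp_adjoint_mul_mul_adjoint :
    absOp (adjoint S) * (V * adjoint V) = absOp (adjoint S) := by
  rw [← mul_assoc, hS.absOp_adjoint_mul, hS.mul_adjoint]

lemma mul_adjoint_mul_absOp_adjoint : V * adjoint V * absOp (adjoint S) = absOp (adjoint S) := by
  simpa only [adjoint_mul, adjoint_absOp, adjoint_adjoint, mul_assoc] using
    congrArg adjoint hS.absOp_adjoint_mul_mul_adjoint

lemma rangeProjOp_absOp_adjoint_mul : rangeProjOp (absOp (adjoint S)) * V = V :=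
  rangeProjOp_mul_eq_self fun y hy => by
    rw [adjoint_absOp, ← hS.mul_adjoint, mul_apply_eq_comp] at hy
    rw [← hS.rangeProjOp_mul_adjoint, mul_apply_eq_comp, rangeProjOp_apply_eq_zero_iff,
      adjoint_adjoint, hy]

end

section

variable {T S U V : H →L[ℂ] H} (hT : IsPolarDecompositionOp T U)
  (hS : IsPolarDecompositionOp S V)
include hT hS

lemma mul_eq : T * S = U * (absOp T * absOp (adjoint S)) * V := by
  conv_lhs => rw [hT.1, ← hS.absOp_adjoint_mul]
  simp only [mul_assoc]

lemma adjoint_mul_self_mul : adjoint (T * S) * (T * S) =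
    adjoint V * (absOp (adjoint S) * absOp T * (absOp T * absOp (adjoint S))) * V := by
  rw [hT.mul_eq hS]
  simp only [adjoint_mul, adjoint_absOp, ← mul_assoc]
  rw [mul_assoc _ (adjoint U) U, hT.2.2, mul_assoc _ _ (absOp T),
    rangeProjOp_adjoint_mul_absOp]

lemma adjoint_mul_mul : adjoint U * (T * S) = absOp T * absOp (adjoint S) * V := by
  rw [hT.mul_eq hS]
  simp only [← mul_assoc]
  rw [hT.2.2, rangeProjOp_adjoint_mul_absOp]

section Commute

variable (h : Commute (absOp T) (absOp (adjoint S)))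
include h

lemma absOp_mul_of_commute :
    absOp (T * S) = adjoint V * (absOp T * absOp (adjoint S)) * V := by
  refine absOp_eq_of_mul_self ?_ ?_
  · have hAB : 0 ≤ absOp T * absOp (adjoint S) :=
      h.mul_nonneg (absOp_nonneg T) (absOp_nonneg (adjoint S))
    simpa only [star_eq_adjoint] using star_left_conjugate_nonneg hAB V
  · calc adjoint V * (absOp T * absOp (adjoint S)) * V *
          (adjoint V * (absOp T * absOp (adjoint S)) * V)
        = adjoint V * (absOp T * (absOp (adjoint S) * (V * adjoint V)) *
            (absOp T * absOp (adjoint S))) * V := by simp only [mul_assoc]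
      _ = adjoint V * (absOp (adjoint S) * absOp T * (absOp T * absOp (adjoint S))) * V := by
        rw [hS.absOp_adjoint_mul_mul_adjoint, h.eq]
      _ = adjoint (T * S) * (T * S) := (hT.adjoint_mul_self_mul hS).symm

lemma mul_eq_mul_mul_absOp_of_commute : T * S = U * V * absOp (T * S) :=
  calc T * S = U * (absOp (adjoint S) * absOp T) * V := by rw [hT.mul_eq hS, h.eq]
    _ = U * (V * adjoint V * absOp (adjoint S) * absOp T) * V := by
      rw [hS.mul_adjoint_mul_absOp_adjoint]
    _ = U * V * absOp (T * S) := by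
      rw [hT.absOp_mul_of_commute hS h, h.eq]
      simp only [mul_assoc]

lemma absOp_apply_eq_zero_of_mul_apply_eq_zero {y : H} (hy : (T * S) y = 0) :
    absOp T (V y) = 0 := by
  have hABV : absOp T (absOp (adjoint S) (V y)) = 0 := by
    simpa only [mul_apply_eq_comp, hy, map_zero] using
      (congrArg (· y) (hT.adjoint_mul_mul hS)).symm
  have hQA := commute_rangeProjOp_of_commute (absOp_nonneg (adjoint S)).isSelfAdjoint h
  calc absOp T (V y) = absOp T (rangeProjOp (absOp (adjoint S)) (V y)) :=
        congrArg (absOp T) (congrArg (· y) hS.rangeProjOp_absOp_adjoint_mul).symm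
    _ = rangeProjOp (absOp (adjoint S)) (absOp T (V y)) := congrArg (· (V y)) hQA.eq
    _ = 0 := by
      rw [rangeProjOp_apply_eq_zero_iff, adjoint_absOp, ← mul_apply_eq_comp, ← h.eq,
        mul_apply_eq_comp, hABV]

lemma adjoint_mul_self_mul_eq_rangeProjOp_of_commute :
    adjoint (U * V) * (U * V) = rangeProjOp (adjoint (T * S)) := by
  refine eq_rangeProjOp_of ?_ fun y hy => ?_
  · calc adjoint (U * V) * (U * V) * adjoint (T * S)
        = adjoint V * (adjoint U * U) * (V * adjoint V * absOp (adjoint S)) * absOp T *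
            adjoint U := by
          rw [hT.mul_eq hS]; simp only [adjoint_mul, adjoint_absOp, mul_assoc]
      _ = adjoint V * (rangeProjOp (adjoint T) * (absOp T * absOp (adjoint S))) * adjoint U := by
          rw [hT.2.2, hS.mul_adjoint_mul_absOp_adjoint, h.eq]; simp only [mul_assoc]
      _ = adjoint V * (absOp (adjoint S) * absOp T) * adjoint U := by
          rw [← mul_assoc (rangeProjOp _), rangeProjOp_adjoint_mul_absOp, h.eq]
      _ = adjoint (T * S) := by
          rw [hT.mul_eq hS]; simp only [adjoint_mul, adjoint_absOp, mul_assoc]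
  rw [adjoint_adjoint] at hy
  have hTV : T (V y) = 0 :=
    (absOp_apply_eq_zero_iff T _).mp (hT.absOp_apply_eq_zero_of_mul_apply_eq_zero hS h hy)
  have hPV : rangeProjOp (adjoint T) (V y) = 0 :=
    rangeProjOp_apply_eq_zero_iff.mpr (by rwa [adjoint_adjoint])
  rw [adjoint_mul, ← mul_assoc, mul_assoc _ (adjoint U), hT.2.2]
  simp only [mul_apply_eq_comp, hPV, map_zero]

lemma isPolarDecompositionOp_mul_of_commute : IsPolarDecompositionOp (T * S) (U * V) :=
  have hR := hT.adjoint_mul_self_mul_eq_rangeProjOp_of_commute hS h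
  ⟨hT.mul_eq_mul_mul_absOp_of_commute hS h, isPartialIsometryOp_of_adjoint_mul_self_eq hR, hR⟩

end Commute

lemma commute_of_mul_eq_mul_mul_absOp (h : T * S = U * V * absOp (T * S)) :
    Commute (absOp T) (absOp (adjoint S)) := by
  set W := absOp (T * S) with hW
  set Y := V * W * adjoint V
  have hAB : absOp T * absOp (adjoint S) = rangeProjOp (adjoint T) * Y :=
    calc absOp T * absOp (adjoint S) = adjoint U * (T * S) * adjoint V := by
          rw [hT.adjoint_mul_mul hS]; simp only [mul_assoc]
          rw [hS.absOp_adjoint_mul_mul_adjoint]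
      _ = rangeProjOp (adjoint T) * Y := by rw [h, ← hT.2.2]; simp only [Y, mul_assoc]
  have hWQ : W * rangeProjOp (adjoint S) = W := mul_rangeProjOp_eq_self fun y hy => by
    rw [adjoint_adjoint] at hy
    rw [hW, absOp_apply_eq_zero_iff, mul_apply_eq_comp, hy, map_zero]
  have hY : adjoint Y = Y := by
    simp only [Y, hW, adjoint_mul, adjoint_adjoint, adjoint_absOp, mul_assoc]
  have hYY : adjoint Y * Y =
      adjoint (absOp T * absOp (adjoint S)) * (absOp T * absOp (adjoint S)) :=
    calc adjoint Y * Y = V * (W * (adjoint V * V) * W) * adjoint V := by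
          rw [hY]; simp only [Y, mul_assoc]
      _ = V * adjoint V * (absOp (adjoint S) * absOp T * (absOp T * absOp (adjoint S))) *
            (V * adjoint V) := by
          rw [hS.2.2, hWQ, hW, absOp_mul_absOp, hT.adjoint_mul_self_mul hS]
          simp only [mul_assoc]
      _ = adjoint (absOp T * absOp (adjoint S)) * (absOp T * absOp (adjoint S)) := by
          simp only [adjoint_mul, adjoint_absOp, ← mul_assoc]
          rw [hS.mul_adjoint_mul_absOp_adjoint, mul_assoc _ V,
            mul_assoc _ (absOp (adjoint S)) (V * adjoint V), hS.absOp_adjoint_mul_mul_adjoint]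
  have hABY := eq_of_rangeProjOp_mul_eq hAB hYY.symm
  calc absOp T * absOp (adjoint S) = adjoint Y := by rw [hY, hABY]
    _ = absOp (adjoint S) * absOp T := by rw [← hABY, adjoint_mul, adjoint_absOp, adjoint_absOp]

end

end IsPolarDecompositionOp

/-- For polar decompositions `T = U|T|` and `S = V|S|`, the following are
equivalent: (i) `|T||S^*| = |S^*||T|`; (ii) `TS = UV|TS|` is the polar
decomposition of `TS`; (iii) `TS = UV|TS|`. -/
theorem tfae_polarDecomposition_mul (T S U V : H →L[ℂ] H)
    (hT : IsPolarDecompositionOp T U) (hS : IsPolarDecompositionOp S V) :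
    List.TFAE [absOp T * absOp (adjoint S) = absOp (adjoint S) * absOp T,
      IsPolarDecompositionOp (T * S) (U * V),
      T * S = (U * V) * absOp (T * S)] := by
  tfae_have 1 → 2 := hT.isPolarDecompositionOp_mul_of_commute hS
  tfae_have 2 → 3 := fun h => h.1
  tfae_have 3 → 1 := hT.commute_of_mul_eq_mul_mul_absOp hS
  tfae_finish
end
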